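/- Let t(k) = #{(a,b,c) ∈ ℕ³ : 2a+3b+4c = k}. Then for every integer k ≥ 0 one has the recurrence relations t(2k+3) = t(2k) and t(2k+13) = t(2k+1) + k + 5. -/

import Mathlib

open Complex Filter Finset Real

noncomputable section

/-- The lattice point `m + n·τ` associated with `p = (m, n) ∈ ℤ × ℤ`. -/
def latP (τ : ℂ) (p : ℤ × ℤ) : ℂ := (p.1 : ℂ) + (p.2 : ℂ) * τ

/-- The lattice `ℤ + τℤ` in `ℂ`. -/
def lat (τ : ℂ) : Set ℂ := {w : ℂ | ∃ p : ℤ × ℤ, w = latP τ p}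

/-- The Weierstrass ℘-function of the lattice `ℤ + τℤ`. -/
def wp (τ z : ℂ) : ℂ :=
  1 / z ^ 2 + ∑' p : ℤ × ℤ, if p ≠ 0 then 1 / (z - latP τ p) ^ 2 - 1 / latP τ p ^ 2 else 0

/-- The partial derivative `∂_z ℘`. -/
def wpz (τ z : ℂ) : ℂ := deriv (wp τ) z

/-- The Eisenstein series `e_k(τ) = Σ_{w ∈ Λ_τ ∖ {0}} w^{-k}`. -/
def eis (k : ℕ) (τ : ℂ) : ℂ := ∑' p : ℤ × ℤ, if p ≠ 0 then 1 / latP τ p ^ k else 0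

def e4 : ℂ → ℂ := eis 4
def e6 : ℂ → ℂ := eis 6

/-- The weight 2 Eisenstein series `e₂`. -/
def e2 (τ : ℂ) : ℂ :=
  (π : ℂ) ^ 2 / 3 *
    (1 - 24 * ∑' n : ℕ, (∑ d ∈ (n + 1).divisors, (d : ℂ)) * Complex.exp (2 * π * I * (n + 1) * τ))

/-- Inner (Eichler) sum in the definition of `E₁`. -/
def E1inner (τ z : ℂ) (m : ℤ) : ℂ :=
  limUnder atTop fun N : ℕ =>
    ∑ n ∈ Finset.Icc (-(N : ℤ)) (N : ℤ),
      if (m, n) ≠ ((0 : ℤ), (0 : ℤ)) then 1 / (z + m + n * τ) else 0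

/-- The first shifted Eisenstein function `E₁` (Eichler summation). -/
def E1 (τ z : ℂ) : ℂ :=
  limUnder atTop fun M : ℕ => ∑ m ∈ Finset.Icc (-(M : ℤ)) (M : ℤ), E1inner τ z m

/-- The Jacobi group `SL(2,ℤ) ⋉ ℤ²`. -/
abbrev JacobiGroup : Type := Matrix.SpecialLinearGroup (Fin 2) ℤ × ℤ × ℤ

def ja (A : JacobiGroup) : ℂ := ((A.1 0 0 : ℤ) : ℂ)
def jb (A : JacobiGroup) : ℂ := ((A.1 0 1 : ℤ) : ℂ)
def jc (A : JacobiGroup) : ℂ := ((A.1 1 0 : ℤ) : ℂ)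
def jd (A : JacobiGroup) : ℂ := ((A.1 1 1 : ℤ) : ℂ)
def jlam (A : JacobiGroup) : ℂ := (A.2.1 : ℂ)
def jmu (A : JacobiGroup) : ℂ := (A.2.2 : ℂ)

/-- Multiplication `(g,Λ)(g',Λ') = (gg', Λg' + Λ')` of the Jacobi group. -/
def jmul (A B : JacobiGroup) : JacobiGroup :=
  (A.1 * B.1,
    (A.2.1 * B.1 0 0 + A.2.2 * B.1 1 0 + B.2.1,
     A.2.1 * B.1 0 1 + A.2.2 * B.1 1 1 + B.2.2))

/-- The weight `k`, index-zero action of the Jacobi group on functions `ℂ → ℂ → ℂ`. -/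
def jslash (k : ℤ) (f : ℂ → ℂ → ℂ) (A : JacobiGroup) : ℂ → ℂ → ℂ := fun τ z =>
  (jc A * τ + jd A) ^ (-k) *
    f ((ja A * τ + jb A) / (jc A * τ + jd A))
      ((z + jlam A * τ + jmu A) / (jc A * τ + jd A))

def Jfun (A : JacobiGroup) : ℂ → ℂ → ℂ := fun τ _ => jc A * τ + jd A

def Xfun (A : JacobiGroup) : ℂ → ℂ → ℂ := fun τ _ => jc A / (jc A * τ + jd A)

def Yfun (A : JacobiGroup) : ℂ → ℂ → ℂ := fun τ z =>
  (jc A * z + jc A * jmu A - jd A * jlam A) / (jc A * τ + jd A)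

/-- A singular function on `ℋ × ℂ`. -/
def IsSingular (f : ℂ → ℂ → ℂ) : Prop :=
  ∃ p : ℕ,
    (∀ τ : ℂ, 0 < τ.im →
      (∀ z : ℂ, f τ (z + 1) = f τ z) ∧
      DifferentiableOn ℂ (f τ) (lat τ)ᶜ ∧
      ∀ w ∈ lat τ,
        (p = 0 → AnalyticAt ℂ (f τ) w) ∧
        (0 < p → ∃ _ : MeromorphicAt (f τ) w, meromorphicOrderAt (f τ) w = (-(p : ℤ) : WithTop ℤ))) ∧
    (∀ τ : ℂ, 0 < τ.im → ∀ z : ℂ, f (τ + 1) z = f τ z) ∧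
    ∃ (L : ℕ → ℂ → ℂ) (cf : ℕ → ℕ → ℂ),
      (∀ τ : ℂ, 0 < τ.im → ∃ ε > 0, ∀ z : ℂ, z ≠ 0 → ‖z‖ < ε →
        f τ z = ∑' n : ℕ, L n τ * z ^ ((n : ℤ) - (p : ℤ))) ∧
      (∀ n, DifferentiableOn ℂ (L n) {τ : ℂ | 0 < τ.im}) ∧
      (∀ n, ∀ τ : ℂ, 0 < τ.im → L n τ = ∑' r : ℕ, cf n r * Complex.exp (2 * π * I * (r : ℂ) * τ))

/-- A singular Jacobi form of index zero and weight `k`. -/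
def IsSingularJacobiForm (k : ℤ) (f : ℂ → ℂ → ℂ) : Prop :=
  IsSingular f ∧
    ∀ A : JacobiGroup, ∀ τ z : ℂ, 0 < τ.im → z ∉ lat τ → jslash k f A τ z = f τ z

/-- The modular derivation `∂_τ = (π/(2i)) ∂/∂τ`. -/
def dtau (f : ℂ → ℂ → ℂ) : ℂ → ℂ → ℂ := fun τ z =>
  (π : ℂ) / (2 * I) * deriv (fun t => f t z) τ

/-- The elliptic derivation `∂_z`. -/
def dz (f : ℂ → ℂ → ℂ) : ℂ → ℂ → ℂ := fun τ z => deriv (f τ) z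

/-- The Oberdieck derivation on forms of weight `k`. -/
def Obstar (k : ℤ) (f : ℂ → ℂ → ℂ) : ℂ → ℂ → ℂ := fun τ z =>
  4 * dtau f τ z + E1 τ z * dz f τ z - (k : ℂ) * e2 τ * f τ z

/-- `t k` is the number of triples `(a,b,c) ∈ ℕ³` with `2a+3b+4c = k`. -/
def tJS (k : ℕ) : ℕ := Nat.card {t : ℕ × ℕ × ℕ // 2 * t.1 + 3 * t.2.1 + 4 * t.2.2 = k}

/-!
Dropping one factor `∂_z℘` maps the monomials of weight `n + 3` with `b ≥ 1` bijectively onto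
those of weight `n`, and in odd weight `b` is odd; this is the first recurrence. Dropping one
factor `e₄` likewise gives `t(n + 4) = t(n) + s(n + 4)`, where `s(m)` counts the solutions of
`2a + 3b = m`. For `m = 2j + 3` these are `b = 2i + 1` with `3i ≤ j`, so `s(m) = ⌊j/3⌋ + 1`, and
three such steps give `t(2k + 13) - t(2k + 1) = ⌊(k+1)/3⌋ + ⌊(k+3)/3⌋ + ⌊(k+5)/3⌋ + 3 = k + 5`.
-/

def weightTriples (n : ℕ) : Finset (ℕ × ℕ × ℕ) :=
  (range (n + 1) ×ˢ range (n + 1) ×ˢ range (n + 1)).filter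
    fun t => 2 * t.1 + 3 * t.2.1 + 4 * t.2.2 = n

def weightPairs (n : ℕ) : Finset (ℕ × ℕ) :=
  (range (n + 1) ×ˢ range (n + 1)).filter fun p => 2 * p.1 + 3 * p.2 = n

@[simp]
lemma mem_weightTriples {n : ℕ} {t : ℕ × ℕ × ℕ} :
    t ∈ weightTriples n ↔ 2 * t.1 + 3 * t.2.1 + 4 * t.2.2 = n := by
  simp only [weightTriples, mem_filter, mem_product, mem_range, and_iff_right_iff_imp]
  omega

@[simp]
lemma mem_weightPairs {n : ℕ} {p : ℕ × ℕ} : p ∈ weightPairs n ↔ 2 * p.1 + 3 * p.2 = n := by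
  simp only [weightPairs, mem_filter, mem_product, mem_range, and_iff_right_iff_imp]
  omega

lemma tJS_eq_card_weightTriples (n : ℕ) : tJS n = #(weightTriples n) := by
  rw [tJS, ← Nat.card_eq_finsetCard]
  exact Nat.card_congr (Equiv.subtypeEquivRight fun _ => mem_weightTriples.symm)

lemma tJS_add_three_of_even {n : ℕ} (hn : Even n) : tJS (n + 3) = tJS n := by
  obtain ⟨m, rfl⟩ := hn
  simp only [tJS_eq_card_weightTriples]
  apply card_nbij' (fun t => (t.1, t.2.1 - 1, t.2.2)) (fun t => (t.1, t.2.1 + 1, t.2.2)) <;>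
    rintro ⟨a, b, c⟩ h <;> simp only [mem_coe, mem_weightTriples,
      Prod.mk.injEq, true_and, and_true] at h ⊢ <;> omega

lemma tJS_add_four (n : ℕ) : tJS (n + 4) = tJS n + #(weightPairs (n + 4)) := by
  simp only [tJS_eq_card_weightTriples]
  rw [← card_filter_add_card_filter_not (p := fun t : ℕ × ℕ × ℕ => t.2.2 = 0), add_comm]
  congr 1
  · apply card_nbij' (fun t => (t.1, t.2.1, t.2.2 - 1)) (fun t => (t.1, t.2.1, t.2.2 + 1)) <;>
      rintro ⟨a, b, c⟩ h <;> simp only [mem_coe, mem_filter, mem_weightTriples,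
        Prod.mk.injEq, true_and] at h ⊢ <;> omega
  · apply card_nbij' (fun t => (t.1, t.2.1)) (fun p => (p.1, p.2, 0))
    · rintro ⟨a, b, c⟩ h
      simp only [mem_coe, mem_filter, mem_weightTriples, mem_weightPairs] at h ⊢; omega
    · rintro ⟨a, b⟩ h
      simpa using h
    · rintro ⟨a, b, c⟩ h
      simp only [mem_coe, mem_filter, mem_weightTriples] at h
      rw [h.2]
    · intro p _
      rfl

lemma card_weightPairs_two_mul_add_three (m : ℕ) : #(weightPairs (2 * m + 3)) = m / 3 + 1 := by
  rw [← card_range (m / 3 + 1)]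
  apply card_nbij' (fun p => p.2 / 2) (fun i => (m - 3 * i, 2 * i + 1))
  · rintro ⟨a, b⟩ h
    simp only [mem_coe, mem_weightPairs, mem_range] at h ⊢; omega
  · intro i h
    simp only [mem_coe, mem_weightPairs, mem_range] at h ⊢; omega
  · rintro ⟨a, b⟩ h
    simp only [mem_coe, mem_weightPairs, Prod.mk.injEq] at h ⊢; omega
  · intro i _
    show (2 * i + 1) / 2 = i
    omega

/-- Recurrence relations for the dimensions `t(k)`. -/
theorem tJS_recurrences (k : ℕ) :
    tJS (2 * k + 3) = tJS (2 * k) ∧ tJS (2 * k + 13) = tJS (2 * k + 1) + k + 5 := by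
  refine ⟨tJS_add_three_of_even (even_two_mul k), ?_⟩
  have h13 : tJS (2 * k + 13) = tJS (2 * k + 9) + #(weightPairs (2 * (k + 5) + 3)) :=
    tJS_add_four (2 * k + 9)
  have h9 : tJS (2 * k + 9) = tJS (2 * k + 5) + #(weightPairs (2 * (k + 3) + 3)) :=
    tJS_add_four (2 * k + 5)
  have h5 : tJS (2 * k + 5) = tJS (2 * k + 1) + #(weightPairs (2 * (k + 1) + 3)) :=
    tJS_add_four (2 * k + 1)
  simp only [card_weightPairs_two_mul_add_three] at h13 h9 h5
  omega

end
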